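/- For every q with 1 ≤ q < 3/2 and every R > 0, the function x ↦ |x|^{−q} |x'|^{−q} is integrable on the ball B_R(0) ⊂ ℝ³: ∫_{B_R(0)} |x|^{−q} |x'|^{−q} dx < ∞. Consequently, any measurable function T on ℝ³ satisfying |T(x)| ≤ C/(|x||x'|) almost everywhere, for some constant C, belongs to L^q_loc(ℝ³) for every 1 ≤ q < 3/2. -/

import Mathlib

/-!
On the ball, `|x| ≥ |x₃|` and `|x| ≥ |x'|`, so splitting `|x|^{-q} = |x|^{-(q-1/2)} |x|^{-1/2}` and
using `|x'|² ≥ |x₁||x₂|` gives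
`|x|^{-q} |x'|^{-q} ≤ |x₁|^{-(q/2+1/4)} |x₂|^{-(q/2+1/4)} |x₃|^{-(q-1/2)}`.
The right-hand side is a product of one-variable functions `|t|^{-c}` with `c < 1` (this is where
`q < 3/2` enters), hence integrable on a cube by Fubini. The `L^q` bound for `T` follows since
`|T|^q ≤ |C|^q |x|^{-q} |x'|^{-q}`.
-/

open MeasureTheory Set

/-- The Euclidean norm of `x' = (x₁, x₂)`, the first two coordinates of `x ∈ ℝ³`. -/
noncomputable def primeNorm3 (x : EuclideanSpace ℝ (Fin 3)) : ℝ :=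
  Real.sqrt (x 0 ^ 2 + x 1 ^ 2)

theorem EuclideanSpace.ae_apply_ne_zero {ι : Type*} [Fintype ι] (i : ι) :
    ∀ᵐ x : EuclideanSpace ℝ ι, x i ≠ 0 :=
  (PiLp.volume_preserving_ofLp ι).quasiMeasurePreserving.ae (Measure.ae_eval_ne _ i 0)

theorem EuclideanSpace.integrable_prod_apply {ι : Type*} [Fintype ι] {f : ι → ℝ → ℝ}
    (hf : ∀ i, Integrable (f i)) :
    Integrable (fun x : EuclideanSpace ℝ ι => ∏ i, f i (x i)) :=
  (PiLp.volume_preserving_ofLp ι).integrable_comp_of_integrable (Integrable.fintype_prod hf)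

theorem locallyIntegrable_abs_rpow_neg {c : ℝ} (hc : c < 1) :
    LocallyIntegrable (fun t : ℝ => |t| ^ (-c)) :=
  locallyIntegrable_of_norm_le_rpow (C := 1) (by simp) (by simpa using hc)
    (ae_of_all _ fun t => by simp [abs_of_nonneg (Real.rpow_nonneg (abs_nonneg t) _)])
    (continuous_abs.measurable.pow_const _).aestronglyMeasurable

theorem primeNorm3_le_norm (x : EuclideanSpace ℝ (Fin 3)) : primeNorm3 x ≤ ‖x‖ := by
  rw [EuclideanSpace.norm_eq, primeNorm3, Fin.sum_univ_three]
  refine Real.sqrt_le_sqrt ?_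
  simp only [Real.norm_eq_abs, sq_abs]
  linarith [sq_nonneg (x 2)]

theorem primeNorm3_pos {x : EuclideanSpace ℝ (Fin 3)} (h : x 0 ≠ 0) : 0 < primeNorm3 x :=
  Real.sqrt_pos.2 (by positivity)

theorem abs_mul_abs_le_primeNorm3_sq (x : EuclideanSpace ℝ (Fin 3)) :
    |x 0| * |x 1| ≤ primeNorm3 x ^ 2 := by
  rw [primeNorm3, Real.sq_sqrt (by positivity)]
  nlinarith [sq_abs (x 0), sq_abs (x 1), sq_nonneg (|x 0| - |x 1|)]

theorem rpow_neg_mul_rpow_neg_le {n s u v w q : ℝ} (hq : 1 / 2 ≤ q) (hs : 0 < s) (hu : 0 < u)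
    (hv : 0 < v) (hw : 0 < w) (hsn : s ≤ n) (hwn : w ≤ n) (huv : u * v ≤ s ^ 2) :
    n ^ (-q) * s ^ (-q) ≤ u ^ (-(q / 2 + 1 / 4)) * v ^ (-(q / 2 + 1 / 4)) * w ^ (-(q - 1 / 2)) := by
  have hn : 0 < n := hs.trans_le hsn
  calc n ^ (-q) * s ^ (-q) = n ^ (-(q - 1 / 2)) * n ^ (-(1 / 2) : ℝ) * s ^ (-q) := by
        rw [← Real.rpow_add hn]; ring_nf
    _ ≤ w ^ (-(q - 1 / 2)) * s ^ (-(1 / 2) : ℝ) * s ^ (-q) := by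
        have hnw := Real.rpow_le_rpow_of_nonpos hw hwn (by linarith : -(q - 1 / 2) ≤ 0)
        have hns := Real.rpow_le_rpow_of_nonpos hs hsn (by norm_num : -(1 / 2 : ℝ) ≤ 0)
        gcongr
    _ = w ^ (-(q - 1 / 2)) * (s ^ 2) ^ (-(q / 2 + 1 / 4)) := by
        rw [mul_assoc, ← Real.rpow_add hs, ← Real.rpow_natCast, ← Real.rpow_mul hs.le]; ring_nf
    _ ≤ w ^ (-(q - 1 / 2)) * (u * v) ^ (-(q / 2 + 1 / 4)) := by
        have huv' := Real.rpow_le_rpow_of_nonpos (by positivity) huv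
          (by linarith : -(q / 2 + 1 / 4) ≤ 0)
        gcongr
    _ = u ^ (-(q / 2 + 1 / 4)) * v ^ (-(q / 2 + 1 / 4)) * w ^ (-(q - 1 / 2)) := by
        rw [Real.mul_rpow hu.le hv.le]; ring

theorem integrableOn_ball_norm_rpow_neg_mul_primeNorm3_rpow_neg {q : ℝ} (hq₁ : 1 / 2 ≤ q)
    (hq₂ : q < 3 / 2) (R : ℝ) :
    IntegrableOn (fun x => ‖x‖ ^ (-q) * primeNorm3 x ^ (-q))
      (Metric.ball (0 : EuclideanSpace ℝ (Fin 3)) R) := by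
  set e : Fin 3 → ℝ := ![q / 2 + 1 / 4, q / 2 + 1 / 4, q - 1 / 2]
  have he : ∀ i, e i < 1 := by intro i; fin_cases i <;> simp [e] <;> linarith
  have hg : Integrable fun x : EuclideanSpace ℝ (Fin 3) =>
      ∏ i, (Icc (-R) R).indicator (fun t => |t| ^ (-e i)) (x i) :=
    EuclideanSpace.integrable_prod_apply fun i =>
      ((locallyIntegrable_abs_rpow_neg (he i)).integrableOn_isCompact isCompact_Icc
        ).integrable_indicator measurableSet_Icc
  refine hg.integrableOn.mono' (by unfold primeNorm3; fun_prop) ?_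
  filter_upwards [ae_restrict_mem Metric.isOpen_ball.measurableSet,
    ae_restrict_of_ae (EuclideanSpace.ae_apply_ne_zero 0),
    ae_restrict_of_ae (EuclideanSpace.ae_apply_ne_zero 1),
    ae_restrict_of_ae (EuclideanSpace.ae_apply_ne_zero 2)] with x hx h0 h1 h2
  have habs : ∀ i, |x i| ≤ ‖x‖ := fun i => by simpa using PiLp.norm_apply_le x i
  have hmem : ∀ i, x i ∈ Icc (-R) R := fun i =>
    abs_le.1 ((habs i).trans (mem_ball_zero_iff.1 hx).le)
  have hs := primeNorm3_pos h0
  rw [Fin.prod_univ_three, indicator_of_mem (hmem 0), indicator_of_mem (hmem 1),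
    indicator_of_mem (hmem 2), Real.norm_of_nonneg (by positivity)]
  exact rpow_neg_mul_rpow_neg_le hq₁ hs (abs_pos.2 h0) (abs_pos.2 h1)
    (abs_pos.2 h2) (primeNorm3_le_norm x) (habs 2) (abs_mul_abs_le_primeNorm3_sq x)

theorem memLp_ball_of_abs_le_div_norm_mul_primeNorm3 {T : EuclideanSpace ℝ (Fin 3) → ℝ}
    (hT : Measurable T) {C : ℝ} (hTC : ∀ᵐ x, |T x| ≤ C / (‖x‖ * primeNorm3 x)) {q : ℝ}
    (hq₁ : 1 / 2 ≤ q) (hq₂ : q < 3 / 2) (R : ℝ) :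
    MemLp T (ENNReal.ofReal q) (volume.restrict (Metric.ball 0 R)) := by
  have hq : 0 < q := by linarith
  rw [← integrable_norm_rpow_iff hT.aestronglyMeasurable (by simpa using hq)
    ENNReal.ofReal_ne_top, ENNReal.toReal_ofReal hq.le]
  refine ((integrableOn_ball_norm_rpow_neg_mul_primeNorm3_rpow_neg hq₁ hq₂ R).const_mul
    (|C| ^ q)).mono' (hT.norm.pow_const q).aestronglyMeasurable ?_
  filter_upwards [ae_restrict_of_ae hTC, ae_restrict_of_ae (EuclideanSpace.ae_apply_ne_zero 0)]
    with x hx h0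
  have hs := primeNorm3_pos h0
  have hn := hs.trans_le (primeNorm3_le_norm x)
  rw [Real.norm_of_nonneg (by positivity), Real.norm_eq_abs]
  calc |T x| ^ q ≤ (|C| / (‖x‖ * primeNorm3 x)) ^ q := by
        gcongr; exact hx.trans (by gcongr; exact le_abs_self C)
    _ = |C| ^ q * (‖x‖ ^ (-q) * primeNorm3 x ^ (-q)) := by
        rw [Real.div_rpow (abs_nonneg C) (by positivity), div_eq_mul_inv, ← Real.rpow_neg
          (by positivity), Real.mul_rpow hn.le hs.le]

/-- For `1 ≤ q < 3/2` the function `|x|^{-q}|x'|^{-q}` is integrable on every ball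
`B_R(0) ⊂ ℝ³`; consequently any measurable `T` with `|T(x)| ≤ C/(|x||x'|)` a.e.
belongs to `L^q_loc(ℝ³)`. -/
theorem stmt12 :
    (∀ q : ℝ, 1 ≤ q → q < 3 / 2 → ∀ R : ℝ, 0 < R →
      (∫⁻ x in Metric.ball (0 : EuclideanSpace ℝ (Fin 3)) R,
        ENNReal.ofReal (‖x‖ ^ (-q) * primeNorm3 x ^ (-q))) < ⊤) ∧
    (∀ T : EuclideanSpace ℝ (Fin 3) → ℝ, Measurable T → ∀ C : ℝ,
      (∀ᵐ x : EuclideanSpace ℝ (Fin 3), |T x| ≤ C / (‖x‖ * primeNorm3 x)) →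
      ∀ q : ℝ, 1 ≤ q → q < 3 / 2 → ∀ R : ℝ, 0 < R →
        MemLp T (ENNReal.ofReal q)
          (MeasureTheory.volume.restrict (Metric.ball (0 : EuclideanSpace ℝ (Fin 3)) R))) :=
  ⟨fun _q hq₁ hq₂ R _ =>
    (integrableOn_ball_norm_rpow_neg_mul_primeNorm3_rpow_neg (by linarith) hq₂ R).lintegral_lt_top,
   fun _T hT _C hTC _q hq₁ hq₂ R _ =>
    memLp_ball_of_abs_le_div_norm_mul_primeNorm3 hT hTC (by linarith) hq₂ R⟩
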